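/- arXiv:1803.10508 — 3 statements merged into one kernel-verified Lean document; each statement's English description precedes it below -/
import Mathlib

section
/- Let (D, I) be a first-order structure with a binary relation I, and let M be the constant-domain Kripke model consisting of a path v₁ → v₂ → w₁ → ⋯ → w_n followed by children u_d (d ∈ D) of w_n, with ρ(u_d, p) = {d} and ρ(u_d, q) = {c : (d,c) ∈ I}, and p, q empty elsewhere. Then for all a, b ∈ D: (a,b) ∈ I iff M, w_n ⊨ ∃z◇(p(x) ∧ q(y)) under any assignment sending x to a and y to b. -/
namespace BFOML

/-- Syntax of the bundled fragment BFOML: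
    `φ ::= P(x̄) | ¬φ | φ∧φ | ∃x□φ | ∃x◇φ`. -/
inductive Formula (P : Type) (ar : P → ℕ) (Var : Type) : Type
  | atom (p : P) (args : Fin (ar p) → Var)
  | neg (φ : Formula P ar Var)
  | conj (φ ψ : Formula P ar Var)
  | exBox (x : Var) (φ : Formula P ar Var)
  | exDia (x : Var) (φ : Formula P ar Var)

/-- An increasing domain model `M = (W, D, δ, R, ρ)`. -/
structure Model (P : Type) (ar : P → ℕ) (W D : Type) where
  R : W → W → Prop
  dom : W → Set D
  dom_nonempty : ∀ w, (dom w).Nonempty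
  mono : ∀ ⦃w v⦄, R w v → dom w ⊆ dom v
  ρ : (w : W) → (p : P) → Set (Fin (ar p) → D)

variable {P Var W D : Type} {ar : P → ℕ}

/-- Satisfaction for BFOML over increasing domain models. -/
def Sat [DecidableEq Var] (M : Model P ar W D) : W → (Var → D) → Formula P ar Var → Prop
  | w, σ, .atom p args => (fun i => σ (args i)) ∈ M.ρ w p
  | w, σ, .neg φ => ¬ Sat M w σ φ
  | w, σ, .conj φ ψ => Sat M w σ φ ∧ Sat M w σ ψ
  | w, σ, .exBox x φ => ∃ d ∈ M.dom w, ∀ v, M.R w v → Sat M v (Function.update σ x d) φ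
  | w, σ, .exDia x φ => ∃ d ∈ M.dom w, ∃ v, M.R w v ∧ Sat M v (Function.update σ x d) φ

/-- Free variables of a BFOML formula. -/
def fv : Formula P ar Var → Set Var
  | .atom _ args => Set.range args
  | .neg φ => fv φ
  | .conj φ ψ => fv φ ∪ fv ψ
  | .exBox x φ => fv φ \ {x}
  | .exDia x φ => fv φ \ {x}

end BFOML

namespace BFOML

/-- Two unary predicates `p` and `q`. -/
inductive PQ : Type | p | q

/-- Both `p` and `q` are unary. -/
abbrev pqAr : PQ → ℕ := fun _ => 1

/-- Worlds of the undecidability-construction model: a path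
`v₁ = inl 0 → v₂ = inl 1 → w₁ = inl 2 → ⋯ → w_n = inl (n+1)`
followed by children `u_d = inr d` (`d ∈ D`) of `w_n`. -/
def PathW (n : ℕ) (D : Type) : Type := Fin (n + 2) ⊕ D

/-- Accessibility: successor steps along the path, plus edges from `w_n`
to each `u_d`. -/
def pathR (n : ℕ) (D : Type) : PathW n D → PathW n D → Prop
  | .inl i, .inl j => (i : ℕ) + 1 = (j : ℕ)
  | .inl i, .inr _ => (i : ℕ) = n + 1
  | .inr _, _ => False

/-- Interpretation: `p` and `q` are empty on the path worlds, while
`ρ(u_d, p) = {d}` and `ρ(u_d, q) = {c : (d,c) ∈ I}`. -/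
def pathρ (n : ℕ) {D : Type} (I : D → D → Prop) :
    PathW n D → (pr : PQ) → Set (Fin (pqAr pr) → D)
  | .inl _, _ => ∅
  | .inr d, .p => {f | f 0 = d}
  | .inr d, .q => {f | I d (f 0)}

/-- The constant-domain model of the undecidability construction. -/
def pathModel (n : ℕ) (D : Type) [Nonempty D] (I : D → D → Prop) :
    Model PQ pqAr (PathW n D) D where
  R := pathR n D
  dom := fun _ => Set.univ
  dom_nonempty := fun _ => Set.univ_nonempty
  mono := fun _ _ _ => subset_rfl
  ρ := pathρ n I

end BFOML
namespace BFOML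

/-- In the undecidability-construction model: `(a,b) ∈ I` iff
`M, w_n ⊨ ∃z◇(p(x) ∧ q(y))` under any assignment with `x ↦ a`, `y ↦ b`. -/
theorem atom_translation_correct {Var : Type} [DecidableEq Var]
    (D : Type) [Nonempty D] (I : D → D → Prop) (n : ℕ)
    (x y z : Var) (hzx : z ≠ x) (hzy : z ≠ y)
    (a b : D) (σ : Var → D) (hx : σ x = a) (hy : σ y = b) :
    I a b ↔
      Sat (pathModel n D I) (Sum.inl (Fin.last (n + 1))) σ
        (.exDia z (.conj (.atom .p fun _ => x) (.atom .q fun _ => y))) := by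
  constructor
  · intro h
    obtain ⟨d⟩ := ‹Nonempty D›
    refine ⟨d, Set.mem_univ d, Sum.inr a, rfl, ?_, ?_⟩
    · simp [Sat, pathModel, pathρ, Function.update_of_ne hzx.symm, hx]
    · simp [Sat, pathModel, pathρ, Function.update_of_ne hzx.symm,
        Function.update_of_ne hzy.symm, hx, hy, h]
  · rintro ⟨d, -, v, hR, hp, hq⟩
    cases v with
    | inl j =>
        exfalso
        have hj := j.isLt
        have : (Fin.last (n+1) : Fin (n+2)).val + 1 = (j : ℕ) := hR
        simp [Fin.last] at this
        omega
    | inr c =>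
        simp [Sat, pathModel, pathρ, Function.update_of_ne hzx.symm, hx] at hp
        simp [Sat, pathModel, pathρ, Function.update_of_ne hzy.symm, hy] at hq
        subst hp; exact hq

end BFOML
end

section
/- In the model M of the undecidability construction (path of length n+2 ending in a fan of worlds u_d), for every quantifier-free first-order formula β over a single binary relation R and every assignment of its free variables into D: (D, I) ⊨ β iff M, w_n ⊨ φ_β under the corresponding assignment, where φ_β is the translation replacing each atom R(x,y) by ∃z◇(p(x)∧q(y)) and commuting with ¬ and ∧. -/
namespace BFOML

/-- Quantifier-free first-order formulas over a single binary relation `R`. -/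
inductive QF (Var : Type) : Type
  | rel (x y : Var)
  | neg (α : QF Var)
  | conj (α β : QF Var)

/-- Variables occurring in a quantifier-free formula. -/
def QF.vars {Var : Type} : QF Var → Set Var
  | .rel x y => {x, y}
  | .neg α => α.vars
  | .conj α β => α.vars ∪ β.vars

/-- First-order satisfaction of quantifier-free formulas in `(D, I)`. -/
def QF.Sat {Var D : Type} (I : D → D → Prop) (σ : Var → D) : QF Var → Prop
  | .rel x y => I (σ x) (σ y)
  | .neg α => ¬ QF.Sat I σ α
  | .conj α β => QF.Sat I σ α ∧ QF.Sat I σ β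

/-- The translation: `R(x,y) ↦ ∃z◇(p(x) ∧ q(y))`, commuting with `¬` and `∧`. -/
def QF.tr {Var : Type} (z : Var) : QF Var → Formula PQ pqAr Var
  | .rel x y => .exDia z (.conj (.atom .p fun _ => x) (.atom .q fun _ => y))
  | .neg α => .neg (α.tr z)
  | .conj α β => .conj (α.tr z) (β.tr z)

/-- For every quantifier-free FO formula `β` and assignment of its variables
into `D`: `(D,I) ⊨ β` iff `M, w_n ⊨ φ_β` in the undecidability model. -/
theorem qf_translation_correct {Var : Type} [DecidableEq Var]
    (D : Type) [Nonempty D] (I : D → D → Prop) (n : ℕ)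
    (β : QF Var) (z : Var) (hz : z ∉ β.vars) (σ : Var → D) :
    QF.Sat I σ β ↔
      Sat (pathModel n D I) (Sum.inl (Fin.last (n + 1))) σ (β.tr z) := by
  induction β with
  | rel x y =>
    have hx : x ≠ z := fun h => hz (by simp [QF.vars, h])
    have hy : y ≠ z := fun h => hz (by simp [QF.vars, h])
    simp only [QF.tr, QF.Sat, Sat, pathModel]
    constructor
    · intro h
      obtain ⟨d⟩ := ‹Nonempty D›
      refine ⟨d, Set.mem_univ d, Sum.inr (σ x), rfl, ?_, ?_⟩
      · simp [pathρ, Function.update_of_ne hx]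
      · simp [pathρ, Function.update_of_ne hy, h]
    · rintro ⟨d, -, v, hR, h1, h2⟩
      cases v with
      | inl j =>
        exfalso
        have : ((Fin.last (n+1) : Fin (n+2)) : ℕ) + 1 = (j : ℕ) := hR
        simp [Fin.last] at this
        omega
      | inr c =>
        simp only [pathρ, Set.mem_setOf_eq, Function.update_of_ne hx,
          Function.update_of_ne hy] at h1 h2
        rw [h1]; exact h2
  | neg α ih =>
    have : z ∉ α.vars := hz
    simp [QF.Sat, QF.tr, Sat, ih this]
  | conj α β ih1 ih2 =>
    have h1 : z ∉ α.vars := fun h => hz (Or.inl h)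
    have h2 : z ∉ β.vars := fun h => hz (Or.inr h)
    simp [QF.Sat, QF.tr, Sat, ih1 h1, ih2 h2]

end BFOML
end

section
/- If Γ = {∃x_j□φ_j : j ≤ n} ∪ {∀y_i◇ψ_i : i ≤ m} ∪ lits is a clean satisfiable set at (M, w, η) with M a constant domain model, then there exist witnesses c₁,…,c_n ∈ D such that: (A) for all v with wRv and all j, M, v, η[x̄ ↦ c̄] ⊨ φ_j, and (B) for every c ∈ D and every i ≤ m there is a successor v of w with M, v, η[x̄ ↦ c̄, y_i ↦ c] ⊨ ψ_i ∧ ⋀_j φ_j, where assignments can be merged since each x_j is free only in φ_j and each y_i is free only in ψ_i. -/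
namespace BFOML

variable {P Var W D : Type} {ar : P → ℕ}

/-- Bound variables of a BFOML formula. -/
def bv : Formula P ar Var → Set Var
  | .atom _ _ => ∅
  | .neg φ => bv φ
  | .conj φ ψ => bv φ ∪ bv ψ
  | .exBox x φ => insert x (bv φ)
  | .exDia x φ => insert x (bv φ)

/-- All variables occurring in a formula. -/
def vars (φ : Formula P ar Var) : Set Var := fv φ ∪ bv φ

/-- Substitution `φ[y/x]`: replace free occurrences of `x` by `y`. -/
def subst [DecidableEq Var] (x y : Var) : Formula P ar Var → Formula P ar Var
  | .atom p args => .atom p (fun i => if args i = x then y else args i)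
  | .neg φ => .neg (subst x y φ)
  | .conj φ ψ => .conj (subst x y φ) (subst x y ψ)
  | .exBox z φ => if z = x then .exBox z φ else .exBox z (subst x y φ)
  | .exDia z φ => if z = x then .exDia z φ else .exDia z (subst x y φ)

/-- Every use of a quantifier quantifies a distinct variable. -/
def NoDupQ : Formula P ar Var → Prop
  | .atom _ _ => True
  | .neg φ => NoDupQ φ
  | .conj φ ψ => NoDupQ φ ∧ NoDupQ ψ ∧ Disjoint (bv φ) (bv ψ)
  | .exBox x φ => NoDupQ φ ∧ x ∉ bv φ
  | .exDia x φ => NoDupQ φ ∧ x ∉ bv φ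

/-- A formula is clean if no variable occurs both bound and free in it and
every use of a quantifier quantifies a distinct variable. -/
def Clean (φ : Formula P ar Var) : Prop :=
  NoDupQ φ ∧ Disjoint (bv φ) (fv φ)

/-- A set of formulas is clean if each member is clean and distinct members
are variable-disjoint with respect to bound variables. -/
def CleanSet (Γ : Set (Formula P ar Var)) : Prop :=
  (∀ φ ∈ Γ, Clean φ) ∧
    ∀ φ ∈ Γ, ∀ ψ ∈ Γ, φ ≠ ψ → Disjoint (bv φ) (vars ψ)

/-- Literals: atoms and negated atoms. -/
def IsLit (φ : Formula P ar Var) : Prop :=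
  (∃ p args, φ = Formula.atom p args) ∨ ∃ p args, φ = Formula.neg (Formula.atom p args)

end BFOML
namespace BFOML

/-- Simultaneous update of an assignment on a vector of variables. -/
noncomputable def updVec {Var D : Type} {n : ℕ}
    (η : Var → D) (xs : Fin n → Var) (cs : Fin n → D) : Var → D :=
  fun v =>
    letI := Classical.propDecidable (∃ j, xs j = v)
    if h : ∃ j, xs j = v then cs h.choose else η v

/-- Satisfaction depends only on the values of free variables. -/
lemma sat_congr {P Var W D : Type} {ar : P → ℕ} [DecidableEq Var] (M : Model P ar W D) :
    ∀ (φ : Formula P ar Var) (w : W) (σ σ' : Var → D),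
    (∀ v ∈ fv φ, σ v = σ' v) → (Sat M w σ φ ↔ Sat M w σ' φ)
  | .atom p args, w, σ, σ', h => by
      simp only [Sat]
      have : (fun i => σ (args i)) = fun i => σ' (args i) :=
        funext fun i => h _ ⟨i, rfl⟩
      rw [this]
  | .neg φ, w, σ, σ', h => by
      simp only [Sat]
      exact not_congr (sat_congr M φ w σ σ' h)
  | .conj φ ψ, w, σ, σ', h => by
      simp only [Sat]
      exact and_congr (sat_congr M φ w σ σ' fun v hv => h v (Or.inl hv))
        (sat_congr M ψ w σ σ' fun v hv => h v (Or.inr hv))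
  | .exBox x φ, w, σ, σ', h => by
      simp only [Sat]
      refine exists_congr fun d => and_congr_right fun _ =>
        forall_congr' fun v => imp_congr_right fun _ =>
          sat_congr M φ v _ _ ?_
      intro u hu
      by_cases hx : u = x
      · subst hx; simp
      · rw [Function.update_of_ne hx, Function.update_of_ne hx]
        exact h u ⟨hu, hx⟩
  | .exDia x φ, w, σ, σ', h => by
      simp only [Sat]
      refine exists_congr fun d => and_congr_right fun _ =>
        exists_congr fun v => and_congr_right fun _ =>
          sat_congr M φ v _ _ ?_
      intro u hu
      by_cases hx : u = x
      · subst hx; simp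
      · rw [Function.update_of_ne hx, Function.update_of_ne hx]
        exact h u ⟨hu, hx⟩

/-- Completeness of the constant-domain `BR` rule. -/
theorem br_rule_complete {P Var W D : Type} {ar : P → ℕ} [DecidableEq Var]
    {n m : ℕ} (M : Model P ar W D)
    (hconst : ∀ w, M.dom w = (Set.univ : Set D))
    (x : Fin n → Var) (φ : Fin n → Formula P ar Var)
    (y : Fin m → Var) (ψ : Fin m → Formula P ar Var)
    (lits : Set (Formula P ar Var)) (hlits : ∀ r ∈ lits, IsLit r)
    (Γ : Set (Formula P ar Var))
    (hΓ : Γ = (Set.range fun j => Formula.exBox (x j) (φ j)) ∪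
              (Set.range fun i => Formula.neg (.exBox (y i) (.neg (ψ i)))) ∪ lits)
    (hclean : CleanSet Γ)
    (w : W) (η : Var → D) (hsat : ∀ γ ∈ Γ, Sat M w η γ) :
    ∃ c : Fin n → D,
      (∀ v, M.R w v → ∀ j, Sat M v (updVec η x c) (φ j)) ∧
      (∀ c' : D, ∀ i : Fin m, ∃ v, M.R w v ∧
        Sat M v (Function.update (updVec η x c) (y i) c') (ψ i) ∧
        ∀ j, Sat M v (Function.update (updVec η x c) (y i) c') (φ j)) := by
  -- membership of the two families in Γ
  have hEB : ∀ j : Fin n, Formula.exBox (x j) (φ j) ∈ Γ := by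
    intro j; rw [hΓ]; exact Or.inl (Or.inl ⟨j, rfl⟩)
  have hAD : ∀ i : Fin m,
      (Formula.neg (.exBox (y i) (.neg (ψ i))) : Formula P ar Var) ∈ Γ := by
    intro i; rw [hΓ]; exact Or.inl (Or.inr ⟨i, rfl⟩)
  -- free variables are contained in vars of the bundled formulas
  have hfvsub : ∀ j : Fin n, fv (φ j) ⊆ vars (Formula.exBox (x j) (φ j)) := by
    intro j u hu
    by_cases h : u = x j
    · exact Or.inr (by simp [bv, h])
    · exact Or.inl ⟨hu, by simp [h]⟩
  have hfvsub' : ∀ i : Fin m,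
      fv (ψ i) ⊆ vars (Formula.neg (.exBox (y i) (.neg (ψ i))) : Formula P ar Var) := by
    intro i u hu
    by_cases h : u = y i
    · exact Or.inr (by simp [bv, h])
    · exact Or.inl ⟨hu, by simp [h]⟩
  -- cleanliness consequences
  have hkey : ∀ k j : Fin n, x k ∈ vars (Formula.exBox (x j) (φ j)) →
      (Formula.exBox (x k) (φ k) : Formula P ar Var) = Formula.exBox (x j) (φ j) := by
    intro k j hmem
    by_contra hne
    have hd := hclean.2 _ (hEB k) _ (hEB j) hne
    exact (Set.disjoint_left.mp hd (by simp [bv])) hmem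
  have hkey2 : ∀ (i : Fin m) (j : Fin n), y i ∉ fv (φ j) := by
    intro i j h
    have hne : (Formula.neg (.exBox (y i) (.neg (ψ i))) : Formula P ar Var) ≠
        Formula.exBox (x j) (φ j) := by intro hc; cases hc
    have hd := hclean.2 _ (hAD i) _ (hEB j) hne
    exact (Set.disjoint_left.mp hd (by simp [bv])) (hfvsub j h)
  have hkey3 : ∀ (k : Fin n) (i : Fin m), x k ∉ fv (ψ i) := by
    intro k i h
    have hne : (Formula.exBox (x k) (φ k) : Formula P ar Var) ≠
        Formula.neg (.exBox (y i) (.neg (ψ i))) := by intro hc; cases hc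
    have hd := hclean.2 _ (hEB k) _ (hAD i) hne
    exact (Set.disjoint_left.mp hd (by simp [bv])) (hfvsub' i h)
  -- extract witnesses from the ∃x□ formulas
  have hw : ∀ j : Fin n, ∃ d : D, ∀ v, M.R w v →
      Sat M v (Function.update η (x j) d) (φ j) := by
    intro j
    have h := hsat _ (hEB j)
    simp only [Sat] at h
    obtain ⟨d, _, hd⟩ := h
    exact ⟨d, hd⟩
  choose c hc using hw
  -- extract the ∀y◇ information
  have hB0 : ∀ (i : Fin m) (d : D), ∃ v, M.R w v ∧
      Sat M v (Function.update η (y i) d) (ψ i) := by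
    intro i d
    have h := hsat _ (hAD i)
    simp only [Sat] at h
    push_neg at h
    have := h d (by rw [hconst]; trivial)
    obtain ⟨v, hv, hs⟩ := this
    exact ⟨v, hv, hs⟩
  -- part (A)
  have hA : ∀ v, M.R w v → ∀ j, Sat M v (updVec η x c) (φ j) := by
    intro v hv j
    have hex : ∃ k, x k = x j := ⟨j, rfl⟩
    have hk : x hex.choose = x j := hex.choose_spec
    have heq : (Formula.exBox (x hex.choose) (φ hex.choose) : Formula P ar Var) =
        Formula.exBox (x j) (φ j) :=
      hkey _ j (by rw [hk]; exact Or.inr (by simp [bv]))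
    have hφ : φ hex.choose = φ j := by
      injection heq
    have hsatk := hc hex.choose v hv
    rw [hk, hφ] at hsatk
    refine (sat_congr M (φ j) v _ _ ?_).mpr hsatk
    intro u hu
    by_cases hux : u = x j
    · subst hux
      show updVec η x c (x j) = Function.update η (x j) (c hex.choose) (x j)
      simp only [updVec]
      rw [dif_pos hex, Function.update_self]
    · have hne : ¬ ∃ k', x k' = u := by
        rintro ⟨k', rfl⟩
        have heq' := hkey k' j (hfvsub j hu)
        have : x k' = x j := by injection heq'
        exact hux this
      simp only [updVec]
      rw [dif_neg hne, Function.update_of_ne hux]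
  refine ⟨c, hA, ?_⟩
  intro c' i
  obtain ⟨v, hv, hψ⟩ := hB0 i c'
  refine ⟨v, hv, ?_, ?_⟩
  · refine (sat_congr M (ψ i) v _ _ ?_).mpr hψ
    intro u hu
    by_cases huy : u = y i
    · subst huy; simp
    · rw [Function.update_of_ne huy, Function.update_of_ne huy]
      have hne : ¬ ∃ k, x k = u := by
        rintro ⟨k, rfl⟩; exact hkey3 k i hu
      simp only [updVec]
      rw [dif_neg hne]
  · intro j
    have hAv := hA v hv j
    refine (sat_congr M (φ j) v _ _ ?_).mpr hAv
    intro u hu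
    have huy : u ≠ y i := fun h => hkey2 i j (h ▸ hu)
    rw [Function.update_of_ne huy]

end BFOML
end
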